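/- arXiv:math-ph/0402073 — 4 statements merged into one kernel-verified Lean document; each statement's English description precedes it below -/
import Mathlib

section
/- If p₁ and p₂ are fixed-point-free involutions in S_{2n}, then every orbit of the permutation p₁p₂ has a paired orbit of the same size under p₁ (conjugation by p₁ maps orbits of p₁p₂ to orbits of p₁p₂, pairing each orbit with a distinct orbit of equal cardinality); in particular the number of orbits of p₁p₂ is even. -/
theorem orbits_of_product_of_pairings_paired (n : ℕ)
    (p₁ p₂ : Equiv.Perm (Fin (2 * n)))
    (h₁ : p₁ * p₁ = 1) (h₁' : ∀ i, p₁ i ≠ i)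
    (h₂ : p₂ * p₂ = 1) (h₂' : ∀ i, p₂ i ≠ i) :
    (∃ f : MulAction.orbitRel.Quotient (Subgroup.zpowers (p₁ * p₂)) (Fin (2 * n)) →
        MulAction.orbitRel.Quotient (Subgroup.zpowers (p₁ * p₂)) (Fin (2 * n)),
      -- `f` is induced by conjugation by `p₁`:
      (∀ x : Fin (2 * n),
        f (Quotient.mk (MulAction.orbitRel (Subgroup.zpowers (p₁ * p₂)) (Fin (2 * n))) x) =
          Quotient.mk (MulAction.orbitRel (Subgroup.zpowers (p₁ * p₂)) (Fin (2 * n))) (p₁ x)) ∧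
      -- it pairs each orbit with a distinct orbit:
      (∀ q, f (f q) = q) ∧ (∀ q, f q ≠ q) ∧
      -- of the same cardinality:
      (∀ q, Nat.card q.orbit = Nat.card (f q).orbit)) ∧
    -- in particular the number of orbits is even:
    Even (Nat.card
      (MulAction.orbitRel.Quotient (Subgroup.zpowers (p₁ * p₂)) (Fin (2 * n)))) := by
  classical
  set c := p₁ * p₂ with hc
  have hp₁inv : p₁⁻¹ = p₁ := inv_eq_iff_mul_eq_one.mpr h₁
  have hp₂inv : p₂⁻¹ = p₂ := inv_eq_iff_mul_eq_one.mpr h₂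
  have hconj1 : p₁ * c * p₁⁻¹ = c⁻¹ := by
    rw [hp₁inv, hc, mul_inv_rev, hp₁inv, hp₂inv, ← mul_assoc, h₁, one_mul]
  have hconj : ∀ m : ℤ, p₁ * c ^ m = c ^ (-m) * p₁ := by
    intro m
    have h : (MulAut.conj p₁) (c ^ m) = c ^ (-m) := by
      rw [map_zpow, MulAut.conj_apply, hconj1, inv_zpow, zpow_neg]
    rw [MulAut.conj_apply] at h
    calc p₁ * c ^ m = (p₁ * c ^ m * p₁⁻¹) * p₁ := by group
      _ = c ^ (-m) * p₁ := by rw [h]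
  have key : ∀ (m : ℤ) (x : Fin (2 * n)), p₁ ((c ^ m) x) = (c ^ (-m)) (p₁ x) := by
    intro m x
    have h := congrArg (fun g : Equiv.Perm (Fin (2 * n)) => g x) (hconj m)
    simpa [Equiv.Perm.mul_apply] using h
  have hrel : ∀ x y : Fin (2 * n),
      (MulAction.orbitRel (Subgroup.zpowers c) (Fin (2 * n))) x y →
      (MulAction.orbitRel (Subgroup.zpowers c) (Fin (2 * n))) (p₁ x) (p₁ y) := by
    intro x y h
    rw [MulAction.orbitRel_apply] at h ⊢
    obtain ⟨g, hg⟩ := h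
    obtain ⟨m, hm⟩ := g.2
    have hm' : c ^ m = (g : Equiv.Perm (Fin (2 * n))) := hm
    have hg' : (c ^ m) y = x := by rw [hm']; exact hg
    refine ⟨⟨c ^ (-m), ⟨-m, rfl⟩⟩, ?_⟩
    show (c ^ (-m)) (p₁ y) = p₁ x
    rw [← key m y, hg']
  have hF2 : ∀ q : MulAction.orbitRel.Quotient (Subgroup.zpowers c) (Fin (2 * n)),
      Quotient.map (fun x => p₁ x) hrel (Quotient.map (fun x => p₁ x) hrel q) = q := by
    intro q
    induction q using Quotient.inductionOn with
    | h x =>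
      show Quotient.mk _ (p₁ (p₁ x)) = Quotient.mk _ x
      congr 1
      have h := congrArg (fun g : Equiv.Perm (Fin (2 * n)) => g x) h₁
      simpa [Equiv.Perm.mul_apply] using h
  have hFne : ∀ q : MulAction.orbitRel.Quotient (Subgroup.zpowers c) (Fin (2 * n)),
      Quotient.map (fun x => p₁ x) hrel q ≠ q := by
    intro q
    induction q using Quotient.inductionOn with
    | h x =>
      intro hq
      have hrel' : (MulAction.orbitRel (Subgroup.zpowers c) (Fin (2 * n))) (p₁ x) x :=
        Quotient.exact hq
      rw [MulAction.orbitRel_apply, MulAction.mem_orbit_iff] at hrel'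
      obtain ⟨g, hg⟩ := hrel'
      obtain ⟨m, hm⟩ := g.2
      have hm' : c ^ m = (g : Equiv.Perm (Fin (2 * n))) := hm
      have hg' : (c ^ m) x = p₁ x := by rw [hm']; exact hg
      rcases Int.even_or_odd m with ⟨j, hj⟩ | ⟨j, hj⟩
      · apply h₁' ((c ^ j) x)
        rw [key j x, ← hg', ← Equiv.Perm.mul_apply, ← zpow_add]
        have hjj : -j + m = j := by omega
        rw [hjj]
      · apply h₂' ((c ^ j) x)
        have hp₂c : p₂ = p₁ * c := by rw [hc, ← mul_assoc, h₁, one_mul]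
        have h5 : p₂ ((c ^ j) x) = p₁ ((c ^ (j + 1)) x) := by
          rw [hp₂c, Equiv.Perm.mul_apply, ← Equiv.Perm.mul_apply c, ← zpow_one_add]
          have h6 : (1 : ℤ) + j = j + 1 := by ring
          rw [h6]
        rw [h5, key (j + 1) x, ← hg', ← Equiv.Perm.mul_apply, ← zpow_add]
        have hjj : -(j + 1) + m = j := by omega
        rw [hjj]
  refine ⟨⟨Quotient.map (fun x => p₁ x) hrel, fun x => rfl, hF2, hFne, ?_⟩, ?_⟩
  · -- cardinality
    intro q
    induction q using Quotient.inductionOn with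
    | h x =>
      show Nat.card (MulAction.orbitRel.Quotient.orbit (Quotient.mk _ x)) =
        Nat.card (MulAction.orbitRel.Quotient.orbit (Quotient.mk _ (p₁ x)))
      rw [show (Quotient.mk (MulAction.orbitRel (Subgroup.zpowers c) (Fin (2 * n))) x)
          = Quotient.mk'' x from rfl,
        show (Quotient.mk (MulAction.orbitRel (Subgroup.zpowers c) (Fin (2 * n))) (p₁ x))
          = Quotient.mk'' (p₁ x) from rfl,
        MulAction.orbitRel.Quotient.orbit_mk, MulAction.orbitRel.Quotient.orbit_mk]
      have himg : p₁ '' (MulAction.orbit (Subgroup.zpowers c) x)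
          = MulAction.orbit (Subgroup.zpowers c) (p₁ x) := by
        ext y
        constructor
        · rintro ⟨z, hz, rfl⟩
          obtain ⟨g, hg⟩ := MulAction.mem_orbit_iff.mp hz
          obtain ⟨m, hm⟩ := g.2
          have hm' : c ^ m = (g : Equiv.Perm (Fin (2 * n))) := hm
          have hg' : (c ^ m) x = z := by rw [hm']; exact hg
          rw [← hg', key m x]
          exact MulAction.mem_orbit (p₁ x) (⟨c ^ (-m), ⟨-m, rfl⟩⟩ : Subgroup.zpowers c)
        · intro hy
          obtain ⟨g, hg⟩ := MulAction.mem_orbit_iff.mp hy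
          obtain ⟨m, hm⟩ := g.2
          have hm' : c ^ m = (g : Equiv.Perm (Fin (2 * n))) := hm
          have hg' : (c ^ m) (p₁ x) = y := by rw [hm']; exact hg
          refine ⟨(c ^ (-m)) x, MulAction.mem_orbit x (⟨c ^ (-m), ⟨-m, rfl⟩⟩ : Subgroup.zpowers c), ?_⟩
          rw [key (-m) x, neg_neg, hg']
      rw [← himg, Nat.card_image_of_injective p₁.injective]
  · -- evenness
    set Q := MulAction.orbitRel.Quotient (Subgroup.zpowers c) (Fin (2 * n)) with hQ
    have hfin : Finite Q := Quotient.finite _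
    have hft : Fintype Q := Fintype.ofFinite Q
    set F : Function.End Q := Quotient.map (fun x => p₁ x) hrel with hF
    have hFpow : F ^ (2 : ℕ) ^ (1 : ℕ) = 1 := by
      funext q
      show (F ^ 2) q = q
      rw [pow_two]
      exact hF2 q
    have hmod := Equiv.Perm.card_fixedPoints_modEq (α := Q) (p := 2) (n := 1) hFpow
    have hempty : Function.fixedPoints F = ∅ := by
      ext q; exact ⟨fun h => absurd h (hFne q), fun h => h.elim⟩
    have he : IsEmpty (Function.fixedPoints F) := by
      rw [hempty]; exact Set.isEmpty_coe_sort.mpr rfl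
    rw [← Nat.card_eq_fintype_card, ← Nat.card_eq_fintype_card] at hmod
    rw [Nat.card_of_isEmpty (α := Function.fixedPoints F)] at hmod
    exact Nat.even_iff.mpr (by simpa [Nat.ModEq] using hmod)
end

section
/- The function l(p₁,p₂) = |p₁p₂|/2 defines a metric on the set of fixed-point-free involutions of {1,...,2n}: it is nonnegative, vanishes exactly when p₁ = p₂, is symmetric, and satisfies the triangle inequality. -/
/-- The minimal number of transpositions needed to write a permutation
as a product of transpositions. -/
noncomputable def permLength {α : Type*} [DecidableEq α] (σ : Equiv.Perm α) : ℕ :=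
  sInf {k | ∃ l : List (Equiv.Perm α), l.length = k ∧ (∀ τ ∈ l, τ.IsSwap) ∧ l.prod = σ}

/-- Fixed-point-free involutions of `{1, …, 2n}` (pairings). -/
def FPFInvolution (n : ℕ) (σ : Equiv.Perm (Fin (2 * n))) : Prop :=
  σ * σ = 1 ∧ ∀ i, σ i ≠ i

/-- The distance `l(p₁, p₂) = |p₁ p₂| / 2` between two pairings. -/
noncomputable def pairingDist {n : ℕ} (p₁ p₂ : Equiv.Perm (Fin (2 * n))) : ℝ :=
  (permLength (p₁ * p₂) : ℝ) / 2

lemma permSet_nonempty {α : Type*} [DecidableEq α] [Fintype α] (σ : Equiv.Perm α) :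
    {k | ∃ l : List (Equiv.Perm α), l.length = k ∧ (∀ τ ∈ l, τ.IsSwap) ∧ l.prod = σ}.Nonempty := by
  obtain ⟨l, hprod, hswap⟩ := (Equiv.Perm.truncSwapFactors σ).out
  exact ⟨l.length, l, rfl, hswap, hprod⟩

lemma permLength_mem {α : Type*} [DecidableEq α] [Fintype α] (σ : Equiv.Perm α) :
    ∃ l : List (Equiv.Perm α), l.length = permLength σ ∧ (∀ τ ∈ l, τ.IsSwap) ∧ l.prod = σ :=
  Nat.sInf_mem (permSet_nonempty σ)

lemma permLength_one {α : Type*} [DecidableEq α] : permLength (1 : Equiv.Perm α) = 0 := by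
  have : (0 : ℕ) ∈ {k | ∃ l : List (Equiv.Perm α), l.length = k ∧ (∀ τ ∈ l, τ.IsSwap) ∧ l.prod = 1} :=
    ⟨[], rfl, by simp, rfl⟩
  exact Nat.le_zero.mp (Nat.sInf_le this)

lemma permLength_eq_zero_iff {α : Type*} [DecidableEq α] [Fintype α] (σ : Equiv.Perm α) :
    permLength σ = 0 ↔ σ = 1 := by
  constructor
  · intro h
    obtain ⟨l, hl, _, hprod⟩ := permLength_mem σ
    rw [h, List.length_eq_zero_iff] at hl
    simp [hl] at hprod
    exact hprod.symm
  · rintro rfl; exact permLength_one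

lemma permLength_mul_le {α : Type*} [DecidableEq α] [Fintype α] (σ τ : Equiv.Perm α) :
    permLength (σ * τ) ≤ permLength σ + permLength τ := by
  obtain ⟨l₁, hl₁, hs₁, hp₁⟩ := permLength_mem σ
  obtain ⟨l₂, hl₂, hs₂, hp₂⟩ := permLength_mem τ
  refine Nat.sInf_le ⟨l₁ ++ l₂, ?_, ?_, ?_⟩
  · simp [hl₁, hl₂]
  · intro x hx
    rcases List.mem_append.mp hx with h | h
    · exact hs₁ x h
    · exact hs₂ x h
  · rw [List.prod_append, hp₁, hp₂]

lemma permLength_inv {α : Type*} [DecidableEq α] [Fintype α] (σ : Equiv.Perm α) :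
    permLength σ⁻¹ = permLength σ := by
  have key : ∀ ρ : Equiv.Perm α, permLength ρ⁻¹ ≤ permLength ρ := by
    intro ρ
    obtain ⟨l, hl, hs, hp⟩ := permLength_mem ρ
    refine Nat.sInf_le ⟨(l.map (·⁻¹)).reverse, ?_, ?_, ?_⟩
    · simp [hl]
    · intro x hx
      simp only [List.mem_reverse, List.mem_map] at hx
      obtain ⟨y, hy, rfl⟩ := hx
      obtain ⟨a, b, hab, rfl⟩ := hs y hy
      exact ⟨a, b, hab, by simp⟩
    · simp [List.prod_reverse_noncomm, List.map_map, Function.comp, hp]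
  exact le_antisymm (key σ) (by simpa using key σ⁻¹)

theorem pairingDist_is_metric (n : ℕ) :
    (∀ p₁ p₂, FPFInvolution n p₁ → FPFInvolution n p₂ → 0 ≤ pairingDist p₁ p₂) ∧
    (∀ p₁ p₂, FPFInvolution n p₁ → FPFInvolution n p₂ →
      (pairingDist p₁ p₂ = 0 ↔ p₁ = p₂)) ∧
    (∀ p₁ p₂, FPFInvolution n p₁ → FPFInvolution n p₂ →
      pairingDist p₁ p₂ = pairingDist p₂ p₁) ∧
    (∀ p₁ p₂ p₃, FPFInvolution n p₁ → FPFInvolution n p₂ → FPFInvolution n p₃ →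
      pairingDist p₁ p₃ ≤ pairingDist p₁ p₂ + pairingDist p₂ p₃) := by
  have hinv : ∀ p : Equiv.Perm (Fin (2 * n)), FPFInvolution n p → p⁻¹ = p := by
    intro p hp
    exact inv_eq_of_mul_eq_one_left hp.1
  refine ⟨?_, ?_, ?_, ?_⟩
  · intro p₁ p₂ _ _
    unfold pairingDist
    positivity
  · intro p₁ p₂ h₁ h₂
    unfold pairingDist
    rw [div_eq_zero_iff]
    simp only [Nat.cast_eq_zero, OfNat.ofNat_ne_zero, or_false]
    rw [permLength_eq_zero_iff]
    constructor
    · intro h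
      have := congrArg (· * p₂) h
      simpa [mul_assoc, h₂.1] using this
    · rintro rfl; exact h₁.1
  · intro p₁ p₂ h₁ h₂
    unfold pairingDist
    have : p₂ * p₁ = (p₁ * p₂)⁻¹ := by
      rw [mul_inv_rev, hinv p₁ h₁, hinv p₂ h₂]
    rw [this, permLength_inv]
  · intro p₁ p₂ p₃ h₁ h₂ h₃
    unfold pairingDist
    rw [← add_div, div_le_div_iff_of_pos_right (by norm_num), ← Nat.cast_add,
      Nat.cast_le]
    have : p₁ * p₃ = (p₁ * p₂) * (p₂ * p₃) := by
      rw [mul_assoc, ← mul_assoc p₂, h₂.1, one_mul]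
    rw [this]
    exact permLength_mul_le _ _
end

section
/- If n ≠ n′, then for any choices of indices, ∫_{U(d)} U_{i₁j₁} ⋯ U_{iₙjₙ} · conj(U_{i′₁j′₁}) ⋯ conj(U_{i′_{n′}j′_{n′}}) dU = 0. -/
/-!
For `z` on the unit circle the scalar matrix `z • 1` is unitary, and left multiplication by it
scales the integrand by `z ^ n * conj z ^ n' = z ^ (n - n')`. By left invariance of Haar measure
the integral equals this multiple of itself, and `z = exp (iπ / (n - n'))` makes the factor
`-1 ≠ 1`.
-/

open MeasureTheory Matrix ComplexConjugate

theorem integral_eq_zero_of_mul_left_eq_smul {G 𝕜 E : Type*} [Group G] [MeasurableSpace G]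
    [MeasurableMul G] {μ : Measure G} [μ.IsMulLeftInvariant] [RCLike 𝕜]
    [NormedAddCommGroup E] [NormedSpace ℝ E] [NormedSpace 𝕜 E] [SMulCommClass ℝ 𝕜 E]
    {f : G → E} {g : G} {c : 𝕜} (hc : c ≠ 1) (hf : ∀ x, f (g * x) = c • f x) :
    ∫ x, f x ∂μ = 0 := by
  have hinv : c • ∫ x, f x ∂μ = ∫ x, f x ∂μ := by
    rw [← integral_smul, ← integral_mul_left_eq_self f g]
    simp only [hf]
  have : (c - 1) • ∫ x, f x ∂μ = 0 := by rw [sub_smul, one_smul, hinv, sub_self]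
  exact (smul_eq_zero.mp this).resolve_left (sub_ne_zero.mpr hc)

theorem Matrix.prod_smul_apply_mul_prod_conj_smul_apply {ι κ m R : Type*} [Fintype ι] [Fintype κ]
    [CommSemiring R] [StarRing R] (c : R) (A : Matrix m m R) (i j : ι → m) (i' j' : κ → m) :
    (∏ k, (c • A) (i k) (j k)) * ∏ k, conj ((c • A) (i' k) (j' k)) =
      c ^ Fintype.card ι * conj c ^ Fintype.card κ *
        ((∏ k, A (i k) (j k)) * ∏ k, conj (A (i' k) (j' k))) := by
  simp only [smul_apply, smul_eq_mul, map_mul, Finset.prod_mul_distrib, Finset.prod_const,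
    Finset.card_univ]
  ring

theorem Circle.exists_zpow_ne_one {m : ℤ} (hm : m ≠ 0) : ∃ z : Circle, z ^ m ≠ 1 :=
  ⟨Circle.exp (Real.pi / m), by
    rw [← Circle.exp_intCast_mul, mul_div_cancel₀ _ (Int.cast_ne_zero.mpr hm)]
    exact Circle.exp_pi_ne_one⟩

theorem Circle.exists_pow_mul_conj_pow_ne_one {n n' : ℕ} (h : n ≠ n') :
    ∃ z : Circle, (z : ℂ) ^ n * conj (z : ℂ) ^ n' ≠ 1 := by
  obtain ⟨z, hz⟩ := Circle.exists_zpow_ne_one (sub_ne_zero.mpr (Int.natCast_inj.not.mpr h))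
  refine ⟨z, fun h1 => hz (Circle.coe_eq_one.mp ?_)⟩
  rw [← h1, ← Circle.coe_inv_eq_conj, _root_.zpow_sub, zpow_natCast, zpow_natCast, ← inv_pow]
  push_cast
  rfl

theorem Circle.coe_mem_unitary (z : Circle) : (z : ℂ) ∈ unitary ℂ := by
  rw [Unitary.mem_iff, Complex.star_def, Complex.conj_mul', Complex.mul_conj', z.norm_coe]
  norm_num

theorem integral_unbalanced_moment_eq_zero_general (d n n' : ℕ) (hnn' : n ≠ n')
    [MeasurableSpace (Matrix.unitaryGroup (Fin d) ℂ)]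
    [BorelSpace (Matrix.unitaryGroup (Fin d) ℂ)]
    (μ : Measure (Matrix.unitaryGroup (Fin d) ℂ))
    [μ.IsHaarMeasure]
    (i j : Fin n → Fin d) (i' j' : Fin n' → Fin d) :
    ∫ U : Matrix.unitaryGroup (Fin d) ℂ,
        (∏ k : Fin n, (U : Matrix (Fin d) (Fin d) ℂ) (i k) (j k)) *
        (∏ k : Fin n', (starRingEnd ℂ) ((U : Matrix (Fin d) (Fin d) ℂ) (i' k) (j' k))) ∂μ
      = 0 := by
  obtain ⟨z, hz⟩ := Circle.exists_pow_mul_conj_pow_ne_one hnn'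
  let V : unitaryGroup (Fin d) ℂ :=
    ⟨(z : ℂ) • 1, Unitary.smul_mem_of_mem z.coe_mem_unitary (one_mem _)⟩
  refine integral_eq_zero_of_mul_left_eq_smul (g := V) hz fun U => ?_
  have hVU : ((V * U : unitaryGroup (Fin d) ℂ) : Matrix (Fin d) (Fin d) ℂ) = (z : ℂ) • U :=
    smul_one_mul _ _
  rw [hVU, prod_smul_apply_mul_prod_conj_smul_apply, Fintype.card_fin, Fintype.card_fin,
    smul_eq_mul]

theorem integral_unbalanced_moment_eq_zero (d n n' : ℕ) (hnn' : n ≠ n')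
    [MeasurableSpace (Matrix.unitaryGroup (Fin d) ℂ)]
    [BorelSpace (Matrix.unitaryGroup (Fin d) ℂ)]
    (μ : Measure (Matrix.unitaryGroup (Fin d) ℂ))
    [μ.IsHaarMeasure] [IsProbabilityMeasure μ]
    (i j : Fin n → Fin d) (i' j' : Fin n' → Fin d) :
    ∫ U : Matrix.unitaryGroup (Fin d) ℂ,
        (∏ k : Fin n, (U : Matrix (Fin d) (Fin d) ℂ) (i k) (j k)) *
        (∏ k : Fin n', (starRingEnd ℂ) ((U : Matrix (Fin d) (Fin d) ℂ) (i' k) (j' k))) ∂μ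
      = 0 :=
  integral_unbalanced_moment_eq_zero_general d n n' hnn' μ i j i' j'
end

section
/- Let p₁ and p₂ be pairings of the 2n vertices {U₁,...,Uₙ,B₁,...,Bₙ}, and let ρ_B(p) ∈ End((ℂ^d)^{⊗n}) be the Brauer representation operator of the pairing p. Then Tr(ρ_B(p₁) ρ_B(p₂)ᵗ) = d^{c}, where c is the number of connected components of the graph on the 2n vertices whose edge set is the union of the pairs of p₁ and of p₂; equivalently Tr(ρ_B(p₁)ρ_B(p₂)ᵗ) = d^{n − |p₁p₂|/2} where |σ| is the minimal transposition length of σ ∈ S_{2n}. -/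
open Matrix

/-- Assignment of indices to the `2n` vertices: `j k` to the upper vertex `U_k`
(`Sum.inl k`) and `i k` to the bottom vertex `B_k` (`Sum.inr k`). -/
def vtxIdx {d n : ℕ} (j i : Fin n → Fin d) : Fin n ⊕ Fin n → Fin d
  | Sum.inl k => j k
  | Sum.inr k => i k

/-- The Brauer representation operator of a pairing `p` of the `2n` vertices,
as a matrix on `(ℂ^d)^{⊗ n}`: the entry `(j, i)` is `1` when the indices
assigned to vertices joined by `p` coincide, and `0` otherwise. -/
def rhoB (d n : ℕ) (p : Equiv.Perm (Fin n ⊕ Fin n)) :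
    Matrix (Fin n → Fin d) (Fin n → Fin d) ℂ :=
  fun j i => if ∀ v : Fin n ⊕ Fin n, vtxIdx j i (p v) = vtxIdx j i v then 1 else 0

set_option linter.unusedSectionVars false
set_option linter.unusedVariables false

section OrbitCounting

open Equiv MulAction Subgroup

variable {α : Type*} [Fintype α] [DecidableEq α]

/-- The orbit quotient of the subgroup generated by a set of permutations. -/
abbrev OQ (S : Set (Equiv.Perm α)) : Type _ :=
  MulAction.orbitRel.Quotient (Subgroup.closure S) α

/-- Same-orbit relation for the subgroup generated by a set of permutations. -/
def sOrb (S : Set (Equiv.Perm α)) (x y : α) : Prop :=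
  ∃ g ∈ Subgroup.closure S, g x = y

lemma sOrb_refl (S : Set (Equiv.Perm α)) (x : α) : sOrb S x x := ⟨1, one_mem _, rfl⟩

lemma sOrb_symm {S : Set (Equiv.Perm α)} {x y : α} (h : sOrb S x y) : sOrb S y x := by
  obtain ⟨g, hg, rfl⟩ := h
  exact ⟨g⁻¹, inv_mem hg, g.symm_apply_apply x⟩

lemma sOrb_trans {S : Set (Equiv.Perm α)} {x y z : α} (hxy : sOrb S x y)
    (hyz : sOrb S y z) : sOrb S x z := by
  obtain ⟨g, hg, rfl⟩ := hxy
  obtain ⟨h, hh, rfl⟩ := hyz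
  exact ⟨h * g, mul_mem hh hg, rfl⟩

lemma sOrb_gen {S : Set (Equiv.Perm α)} {ρ : Equiv.Perm α} (hρ : ρ ∈ S) (x : α) :
    sOrb S x (ρ x) := ⟨ρ, subset_closure hρ, rfl⟩

lemma sOrb_mono {S T : Set (Equiv.Perm α)} (h : S ⊆ T) {x y : α}
    (hxy : sOrb S x y) : sOrb T x y := by
  obtain ⟨g, hg, rfl⟩ := hxy
  exact ⟨g, Subgroup.closure_mono h hg, rfl⟩

lemma mk_eq_mk {S : Set (Equiv.Perm α)} {x y : α} :
    (Quotient.mk'' x : OQ S) = Quotient.mk'' y ↔ sOrb S x y := by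
  rw [Quotient.eq'']
  rw [MulAction.orbitRel_apply, MulAction.mem_orbit_iff]
  constructor
  · rintro ⟨⟨g, hg⟩, h⟩
    exact sOrb_symm ⟨g, hg, h⟩
  · intro h
    obtain ⟨g, hg, h⟩ := sOrb_symm h
    exact ⟨⟨g, hg⟩, h⟩

noncomputable instance (S : Set (Equiv.Perm α)) : Fintype (OQ S) := Fintype.ofFinite _

/-- The canonical map to the quotient by a larger group. -/
def coarsen {S T : Set (Equiv.Perm α)} (h : S ⊆ T) : OQ S → OQ T :=
  Quotient.lift (fun x => (Quotient.mk'' x : OQ T))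
    (fun x y hxy => mk_eq_mk.2 (sOrb_mono h (mk_eq_mk.1 (Quotient.sound hxy))))

lemma coarsen_mk {S T : Set (Equiv.Perm α)} (h : S ⊆ T) (x : α) :
    coarsen h (Quotient.mk'' x) = Quotient.mk'' x := rfl

lemma coarsen_surjective {S T : Set (Equiv.Perm α)} (h : S ⊆ T) :
    Function.Surjective (coarsen h) := by
  intro X
  induction X using Quotient.inductionOn' with
  | h x => exact ⟨Quotient.mk'' x, rfl⟩

lemma nQ_le_of_subset {S T : Set (Equiv.Perm α)} (h : S ⊆ T) :
    Nat.card (OQ T) ≤ Nat.card (OQ S) :=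
  Nat.card_le_card_of_surjective _ (coarsen_surjective h)

/-- Description of the orbit relation after adding one swap as a generator. -/
lemma sOrb_insert_swap {ρ : Equiv.Perm α} {a b : α} {x y : α} :
    sOrb {ρ, Equiv.swap a b} x y ↔
      sOrb {ρ} x y ∨ (sOrb {ρ} x a ∧ sOrb {ρ} b y) ∨ (sOrb {ρ} x b ∧ sOrb {ρ} a y) := by
  have hsub : ({ρ} : Set (Equiv.Perm α)) ⊆ {ρ, Equiv.swap a b} := by
    intro z hz; simp only [Set.mem_singleton_iff] at hz; simp [hz]
  have hab : sOrb {ρ, Equiv.swap a b} a b := by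
    have := sOrb_gen (S := {ρ, Equiv.swap a b}) (ρ := Equiv.swap a b)
      (Set.mem_insert_iff.2 (Or.inr (Set.mem_singleton _))) a
    rwa [Equiv.swap_apply_left] at this
  constructor
  · rintro ⟨g, hg, rfl⟩
    refine Subgroup.closure_induction
      (p := fun g _ => ∀ x : α, sOrb {ρ} x (g x) ∨ (sOrb {ρ} x a ∧ sOrb {ρ} b (g x)) ∨
        (sOrb {ρ} x b ∧ sOrb {ρ} a (g x))) ?_ ?_ ?_ ?_ hg x
    · intro τ hτ x
      rcases hτ with hτ | hτ
      · subst hτ; exact Or.inl (sOrb_gen (Set.mem_singleton _) x)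
      · subst hτ
        rcases Classical.em (x = a) with rfl | hxa
        · rw [Equiv.swap_apply_left]
          exact Or.inr (Or.inl ⟨sOrb_refl _ _, sOrb_refl _ _⟩)
        rcases Classical.em (x = b) with rfl | hxb
        · rw [Equiv.swap_apply_right]
          exact Or.inr (Or.inr ⟨sOrb_refl _ _, sOrb_refl _ _⟩)
        · rw [Equiv.swap_apply_of_ne_of_ne hxa hxb]
          exact Or.inl (sOrb_refl _ _)
    · intro x; exact Or.inl (sOrb_refl _ x)
    · intro g h hgmem hhmem ihg ihh x
      have h1 := ihh x
      have h2 := ihg (h x)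
      rw [Equiv.Perm.mul_apply]
      rcases h1 with h1 | ⟨h1a, h1b⟩ | ⟨h1a, h1b⟩ <;>
        rcases h2 with h2 | ⟨h2a, h2b⟩ | ⟨h2a, h2b⟩
      · exact Or.inl (sOrb_trans h1 h2)
      · exact Or.inr (Or.inl ⟨sOrb_trans h1 h2a, h2b⟩)
      · exact Or.inr (Or.inr ⟨sOrb_trans h1 h2a, h2b⟩)
      · exact Or.inr (Or.inl ⟨h1a, sOrb_trans h1b h2⟩)
      · exact Or.inl (sOrb_trans h1a (sOrb_trans (sOrb_symm h2a) (sOrb_trans (sOrb_symm h1b) h2b)))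
      · exact Or.inl (sOrb_trans h1a h2b)
      · exact Or.inr (Or.inr ⟨h1a, sOrb_trans h1b h2⟩)
      · exact Or.inl (sOrb_trans h1a h2b)
      · exact Or.inl (sOrb_trans h1a (sOrb_trans (sOrb_symm h2a) (sOrb_trans (sOrb_symm h1b) h2b)))
    · intro g hgmem ihg x
      have h1 := ihg (g⁻¹ x)
      rw [← Equiv.Perm.mul_apply, mul_inv_cancel, Equiv.Perm.one_apply] at h1
      rcases h1 with h1 | ⟨h1a, h1b⟩ | ⟨h1a, h1b⟩
      · exact Or.inl (sOrb_symm h1)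
      · exact Or.inr (Or.inr ⟨sOrb_symm h1b, sOrb_symm h1a⟩)
      · exact Or.inr (Or.inl ⟨sOrb_symm h1b, sOrb_symm h1a⟩)
  · rintro (h | ⟨hxa, hby⟩ | ⟨hxb, hay⟩)
    · exact sOrb_mono hsub h
    · exact sOrb_trans (sOrb_trans (sOrb_mono hsub hxa) hab) (sOrb_mono hsub hby)
    · exact sOrb_trans (sOrb_trans (sOrb_mono hsub hxb) (sOrb_symm hab)) (sOrb_mono hsub hay)

lemma hsub_pair {ρ τ : Equiv.Perm α} : ({ρ} : Set (Equiv.Perm α)) ⊆ {ρ, τ} := by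
  intro z hz; simp only [Set.mem_singleton_iff] at hz; simp [hz]

/-- Adding one swap as a generator decreases the number of orbits by at most one. -/
lemma nQ_le_insert_add_one (ρ : Equiv.Perm α) (a b : α) :
    Nat.card (OQ ({ρ} : Set (Equiv.Perm α))) ≤
      Nat.card (OQ ({ρ, Equiv.swap a b} : Set (Equiv.Perm α))) + 1 := by
  classical
  set T : Set (Equiv.Perm α) := {ρ, Equiv.swap a b} with hT
  have key : Function.Injective (fun X : OQ ({ρ} : Set (Equiv.Perm α)) =>
      if X = Quotient.mk'' b then (none : Option (OQ T))
      else some (coarsen hsub_pair X)) := by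
    intro X Y hXY
    induction X using Quotient.inductionOn' with
    | h x =>
    induction Y using Quotient.inductionOn' with
    | h y =>
    by_cases hX : (Quotient.mk'' x : OQ ({ρ} : Set (Equiv.Perm α))) = Quotient.mk'' b <;>
      by_cases hY : (Quotient.mk'' y : OQ ({ρ} : Set (Equiv.Perm α))) = Quotient.mk'' b <;>
      simp only [hX, hY, if_pos, if_neg, if_true, if_false] at hXY
    · rw [hX, hY]
    · exact absurd hXY (by simp)
    · exact absurd hXY (by simp)
    · simp only [Option.some_inj, coarsen_mk] at hXY
      have h := mk_eq_mk.1 hXY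
      rcases sOrb_insert_swap.1 h with h | ⟨hxa, hby⟩ | ⟨hxb, hay⟩
      · exact mk_eq_mk.2 h
      · exact absurd (mk_eq_mk.2 (sOrb_symm hby)) hY
      · exact absurd (mk_eq_mk.2 hxb) hX
  have hle := Nat.card_le_card_of_injective _ key
  have : Nat.card (Option (OQ T)) = Nat.card (OQ T) + 1 := by
    simp [Nat.card_eq_fintype_card]
  omega

/-- If the two endpoints of the swap are already in the same orbit, the orbit
count is unchanged. -/
lemma nQ_insert_eq_of_sOrb {ρ : Equiv.Perm α} {a b : α} (hab : sOrb {ρ} a b) :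
    Nat.card (OQ ({ρ, Equiv.swap a b} : Set (Equiv.Perm α))) =
      Nat.card (OQ ({ρ} : Set (Equiv.Perm α))) := by
  have hbij : Function.Bijective
      (coarsen (hsub_pair (ρ := ρ) (τ := Equiv.swap a b))) := by
    refine ⟨?_, coarsen_surjective _⟩
    intro X Y hXY
    induction X using Quotient.inductionOn' with
    | h x =>
    induction Y using Quotient.inductionOn' with
    | h y =>
    rw [coarsen_mk, coarsen_mk] at hXY
    rcases sOrb_insert_swap.1 (mk_eq_mk.1 hXY) with h | ⟨hxa, hby⟩ | ⟨hxb, hay⟩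
    · exact mk_eq_mk.2 h
    · exact mk_eq_mk.2 (sOrb_trans (sOrb_trans hxa hab) hby)
    · exact mk_eq_mk.2 (sOrb_trans (sOrb_trans hxb (sOrb_symm hab)) hay)
  exact (Nat.card_congr (Equiv.ofBijective _ hbij)).symm

/-- If the two endpoints of the swap are in different orbits, the orbit count
strictly decreases. -/
lemma nQ_insert_lt_of_not_sOrb {ρ : Equiv.Perm α} {a b : α} (hab : ¬ sOrb {ρ} a b) :
    Nat.card (OQ ({ρ, Equiv.swap a b} : Set (Equiv.Perm α))) + 1 ≤
      Nat.card (OQ ({ρ} : Set (Equiv.Perm α))) := by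
  have hni : ¬ Function.Injective
      (coarsen (hsub_pair (ρ := ρ) (τ := Equiv.swap a b))) := by
    intro hinj
    apply hab
    have : (Quotient.mk'' a : OQ ({ρ, Equiv.swap a b} : Set (Equiv.Perm α))) =
        Quotient.mk'' b := by
      refine mk_eq_mk.2 ?_
      have := sOrb_gen (S := ({ρ, Equiv.swap a b} : Set (Equiv.Perm α)))
        (ρ := Equiv.swap a b) (Set.mem_insert_iff.2 (Or.inr (Set.mem_singleton _))) a
      rwa [Equiv.swap_apply_left] at this
    have := hinj ((coarsen_mk _ a).trans (this.trans (coarsen_mk _ b).symm))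
    exact mk_eq_mk.1 this
  have := Fintype.card_lt_of_surjective_not_injective _
    (coarsen_surjective (hsub_pair (ρ := ρ) (τ := Equiv.swap a b))) hni
  simp only [Nat.card_eq_fintype_card]
  omega

lemma nQ_one : Nat.card (OQ ({1} : Set (Equiv.Perm α))) = Nat.card α := by
  have hbij : Function.Bijective (fun x : α => (Quotient.mk'' x : OQ ({1} : Set (Equiv.Perm α)))) := by
    constructor
    · intro x y hxy
      obtain ⟨g, hg, hgx⟩ := mk_eq_mk.1 hxy
      rw [Subgroup.closure_singleton_one, Subgroup.mem_bot] at hg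
      subst hg; simpa using hgx
    · intro X
      induction X using Quotient.inductionOn' with
      | h x => exact ⟨x, rfl⟩
  exact (Nat.card_congr (Equiv.ofBijective _ hbij)).symm

lemma closure_pair_swap {G : Type*} [Group G] (σ τ : G) (hτ : τ * τ = 1) :
    Subgroup.closure {σ, τ} = Subgroup.closure {τ * σ, τ} := by
  apply le_antisymm <;> rw [Subgroup.closure_le] <;> rintro z hz <;>
    rcases Set.mem_insert_iff.1 hz with rfl | hz
  · have hm : τ * (τ * z) ∈ Subgroup.closure ({τ * z, τ} : Set G) :=
      mul_mem (Subgroup.subset_closure (Set.mem_insert_iff.2 (Or.inr (Set.mem_singleton _))))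
        (Subgroup.subset_closure (Set.mem_insert _ _))
    rwa [← mul_assoc, hτ, one_mul] at hm
  · rw [Set.mem_singleton_iff] at hz; subst hz
    exact Subgroup.subset_closure (Set.mem_insert_iff.2 (Or.inr (Set.mem_singleton _)))
  · exact mul_mem
      (Subgroup.subset_closure (Set.mem_insert_iff.2 (Or.inr (Set.mem_singleton _))))
      (Subgroup.subset_closure (Set.mem_insert _ _))
  · rw [Set.mem_singleton_iff] at hz; subst hz
    exact Subgroup.subset_closure (Set.mem_insert_iff.2 (Or.inr (Set.mem_singleton _)))

lemma lower_bound : ∀ l : List (Equiv.Perm α), (∀ τ ∈ l, τ.IsSwap) →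
    Nat.card α ≤ l.length + Nat.card (OQ ({l.prod} : Set (Equiv.Perm α)))
  | [], _ => by simp only [List.length_nil, List.prod_nil, Nat.zero_add, nQ_one]; exact le_rfl
  | τ :: t, h => by
    obtain ⟨a, b, hab, hτ⟩ := h τ List.mem_cons_self
    have IH := lower_bound t (fun x hx => h x (List.mem_cons_of_mem _ hx))
    have e1 : Nat.card (OQ ({t.prod, Equiv.swap a b} : Set (Equiv.Perm α))) ≤
        Nat.card (OQ ({(τ :: t).prod} : Set (Equiv.Perm α))) := by
      have hcl : Subgroup.closure ({t.prod, Equiv.swap a b} : Set (Equiv.Perm α)) =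
          Subgroup.closure ({(τ :: t).prod, Equiv.swap a b} : Set (Equiv.Perm α)) := by
        rw [List.prod_cons, hτ]
        exact closure_pair_swap _ _ (Equiv.swap_mul_self a b)
      calc Nat.card (OQ ({t.prod, Equiv.swap a b} : Set (Equiv.Perm α)))
          = Nat.card (MulAction.orbitRel.Quotient
              (Subgroup.closure ({(τ :: t).prod, Equiv.swap a b} : Set (Equiv.Perm α))) α) := by
            rw [← hcl]
        _ ≤ Nat.card (OQ ({(τ :: t).prod} : Set (Equiv.Perm α))) := nQ_le_of_subset hsub_pair
    have e2 := nQ_le_insert_add_one t.prod a b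
    simp only [List.length_cons]
    omega

lemma upper_bound : ∀ (k : ℕ) (σ : Equiv.Perm α), σ.support.card ≤ k →
    ∃ l : List (Equiv.Perm α), (∀ τ ∈ l, τ.IsSwap) ∧ l.prod = σ ∧
      l.length + Nat.card (OQ ({σ} : Set (Equiv.Perm α))) = Nat.card α := by
  intro k
  induction k with
  | zero =>
    intro σ hσ
    have : σ = 1 := by
      rwa [Nat.le_zero, Finset.card_eq_zero, Equiv.Perm.support_eq_empty_iff] at hσ
    subst this
    exact ⟨[], by simp, by simp, by simp only [List.length_nil, Nat.zero_add, nQ_one]⟩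
  | succ k ih =>
    intro σ hσ
    by_cases h1 : σ = 1
    · subst h1
      exact ⟨[], by simp, by simp, by simp only [List.length_nil, Nat.zero_add, nQ_one]⟩
    · obtain ⟨a, ha⟩ : ∃ a, σ a ≠ a := by
        by_contra hc
        push_neg at hc
        exact h1 (Equiv.ext hc)
      set b := σ a with hb
      set τ := Equiv.swap a b with hτdef
      set σ' := τ * σ with hσ'def
      have hlt : σ'.support.card < σ.support.card := Equiv.Perm.card_support_swap_mul ha
      obtain ⟨l', hl'sw, hl'prod, hl'len⟩ := ih σ' (by omega)
      have hprod : (τ :: l').prod = σ := by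
        rw [List.prod_cons, hl'prod, hσ'def, ← mul_assoc, Equiv.swap_mul_self, one_mul]
      have hσ'a : σ' a = a := by
        rw [hσ'def, Equiv.Perm.mul_apply, ← hb, hτdef, Equiv.swap_apply_right]
      have hnot : ¬ sOrb {σ'} a b := by
        rintro ⟨g, hg, hga⟩
        rw [← Subgroup.zpowers_eq_closure, Subgroup.mem_zpowers_iff] at hg
        obtain ⟨m, rfl⟩ := hg
        rw [Equiv.Perm.zpow_apply_eq_self_of_apply_eq_self hσ'a m] at hga
        exact ha hga.symm
      have hyes : sOrb {σ} a b := by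
        refine ⟨σ, Subgroup.subset_closure (Set.mem_singleton _), hb.symm⟩
      have key : Nat.card (OQ ({σ'} : Set (Equiv.Perm α))) =
          Nat.card (OQ ({σ} : Set (Equiv.Perm α))) + 1 := by
        have c2 := nQ_le_insert_add_one σ' a b
        have c4 := nQ_insert_lt_of_not_sOrb hnot
        have c3 := nQ_insert_eq_of_sOrb hyes
        have hcl : Subgroup.closure ({σ, τ} : Set (Equiv.Perm α)) =
            Subgroup.closure ({σ', τ} : Set (Equiv.Perm α)) := by
          rw [hσ'def]
          exact closure_pair_swap _ _ (Equiv.swap_mul_self a b)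
        have hQeq : Nat.card (OQ ({σ', Equiv.swap a b} : Set (Equiv.Perm α))) =
            Nat.card (OQ ({σ, Equiv.swap a b} : Set (Equiv.Perm α))) := by
          unfold τ at hcl
          rw [OQ, OQ, ← hcl]
        omega
      refine ⟨τ :: l', ?_, hprod, ?_⟩
      · intro x hx
        rcases List.mem_cons.1 hx with rfl | hx
        · exact ⟨a, b, fun hab => ha hab.symm, rfl⟩
        · exact hl'sw x hx
      · simp only [List.length_cons]
        omega

lemma permLength_add_nQ (σ : Equiv.Perm α) :
    permLength σ + Nat.card (OQ ({σ} : Set (Equiv.Perm α))) = Nat.card α := by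
  obtain ⟨l, hsw, hprod, hlen⟩ := upper_bound σ.support.card σ le_rfl
  have hmem : l.length ∈ {k | ∃ l' : List (Equiv.Perm α),
      l'.length = k ∧ (∀ τ ∈ l', τ.IsSwap) ∧ l'.prod = σ} := ⟨l, rfl, hsw, hprod⟩
  have h1 : permLength σ ≤ l.length := Nat.sInf_le hmem
  have h2 : Nat.card α ≤ permLength σ + Nat.card (OQ ({σ} : Set (Equiv.Perm α))) := by
    obtain ⟨l₀, hl₀len, hl₀sw, hl₀prod⟩ := Nat.sInf_mem (Set.nonempty_of_mem hmem)
    have := lower_bound l₀ hl₀sw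
    rw [hl₀prod] at this
    rw [permLength, ← hl₀len]
    exact this
  omega

lemma nQ_le_card (S : Set (Equiv.Perm α)) : Nat.card (OQ S) ≤ Nat.card α :=
  Nat.card_le_card_of_surjective (fun x => (Quotient.mk'' x : OQ S))
    (by intro X; induction X using Quotient.inductionOn' with | h x => exact ⟨x, rfl⟩)

lemma sOrb_of_le {S T : Set (Equiv.Perm α)} (h : Subgroup.closure S ≤ Subgroup.closure T)
    {x y : α} (hxy : sOrb S x y) : sOrb T x y := by
  obtain ⟨g, hg, rfl⟩ := hxy
  exact ⟨g, h hg, rfl⟩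

/-- The canonical map to the quotient by a larger group. -/
def coarsenLe {S T : Set (Equiv.Perm α)} (h : Subgroup.closure S ≤ Subgroup.closure T) :
    OQ S → OQ T :=
  Quotient.lift (fun x => (Quotient.mk'' x : OQ T))
    (fun x y hxy => mk_eq_mk.2 (sOrb_of_le h (mk_eq_mk.1 (Quotient.sound hxy))))

lemma coarsenLe_mk {S T : Set (Equiv.Perm α)} (h : Subgroup.closure S ≤ Subgroup.closure T)
    (x : α) : coarsenLe h (Quotient.mk'' x) = Quotient.mk'' x := rfl

lemma coarsenLe_surjective {S T : Set (Equiv.Perm α)}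
    (h : Subgroup.closure S ≤ Subgroup.closure T) : Function.Surjective (coarsenLe h) := by
  intro X
  induction X using Quotient.inductionOn' with
  | h x => exact ⟨Quotient.mk'' x, rfl⟩

/-- For a product of two fixed-point-free involutions, the number of orbits of the product
is twice the number of orbits of the group generated by the two involutions. -/
lemma doubling (p₁ p₂ : Equiv.Perm α) (h₁ : p₁ * p₁ = 1) (h₁' : ∀ v, p₁ v ≠ v)
    (h₂ : p₂ * p₂ = 1) (h₂' : ∀ v, p₂ v ≠ v) :
    Nat.card (OQ ({p₁ * p₂} : Set (Equiv.Perm α))) =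
      2 * Nat.card (OQ ({p₁, p₂} : Set (Equiv.Perm α))) := by
  classical
  set σ := p₁ * p₂ with hσ
  have hp₁inv : p₁⁻¹ = p₁ := inv_eq_of_mul_eq_one_left h₁
  have hp₂inv : p₂⁻¹ = p₂ := inv_eq_of_mul_eq_one_left h₂
  have hσinv : σ⁻¹ = p₂ * p₁ := by rw [hσ, _root_.mul_inv_rev, hp₁inv, hp₂inv]
  have hconj : p₁ * σ * p₁⁻¹ = σ⁻¹ := by
    rw [hσinv, hp₁inv, hσ, ← mul_assoc, h₁, one_mul]
  have hp₁σ : p₁ * σ = p₂ := by rw [hσ, ← mul_assoc, h₁, one_mul]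
  have hcomm : ∀ k : ℤ, p₁ * σ ^ k = σ ^ (-k) * p₁ := by
    intro k
    have h := map_zpow (MulAut.conj p₁) σ k
    simp only [MulAut.conj_apply] at h
    rw [hconj, _root_.inv_zpow, ← _root_.zpow_neg] at h
    calc p₁ * σ ^ k = p₁ * σ ^ k * p₁⁻¹ * p₁ := by rw [inv_mul_cancel_right]
    _ = σ ^ (-k) * p₁ := by rw [h]
  have struct : ∀ g ∈ Subgroup.closure ({p₁, p₂} : Set (Equiv.Perm α)),
      ∃ k : ℤ, g = σ ^ k ∨ g = σ ^ k * p₁ := by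
    intro g hg
    refine Subgroup.closure_induction
      (p := fun g _ => ∃ k : ℤ, g = σ ^ k ∨ g = σ ^ k * p₁) ?_ ?_ ?_ ?_ hg
    · rintro τ hτ
      rcases Set.mem_insert_iff.1 hτ with rfl | hτ
      · exact ⟨0, Or.inr (by rw [_root_.zpow_zero, one_mul])⟩
      · rw [Set.mem_singleton_iff] at hτ; subst hτ
        exact ⟨-1, Or.inr (by rw [_root_.zpow_neg_one, hσinv, mul_assoc, h₁, mul_one])⟩
    · exact ⟨0, Or.inl (_root_.zpow_zero σ).symm⟩
    · rintro g h hgm hhm ⟨k, hk⟩ ⟨l, hl⟩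
      rcases hk with rfl | rfl <;> rcases hl with rfl | rfl
      · exact ⟨k + l, Or.inl (by rw [_root_.zpow_add])⟩
      · exact ⟨k + l, Or.inr (by rw [← mul_assoc, ← _root_.zpow_add])⟩
      · exact ⟨k + -l, Or.inr (by rw [mul_assoc, hcomm l, ← mul_assoc, ← _root_.zpow_add])⟩
      · refine ⟨k + -l, Or.inl ?_⟩
        rw [mul_assoc, ← mul_assoc p₁, hcomm l, mul_assoc, h₁, mul_one, ← _root_.zpow_add]
    · rintro g hgm ⟨k, hk⟩
      rcases hk with rfl | rfl
      · exact ⟨-k, Or.inl (by rw [_root_.zpow_neg])⟩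
      · exact ⟨k, Or.inr (by rw [_root_.mul_inv_rev, hp₁inv, ← _root_.zpow_neg, hcomm, neg_neg])⟩
  have hfpf : ∀ (k : ℤ) (x : α), (σ ^ k) x ≠ p₁ x := by
    intro k x hx
    rcases Int.even_or_odd k with ⟨m, hm⟩ | ⟨m, hm⟩
    · subst hm
      have h := congrArg (σ ^ (-m) : Equiv.Perm α) hx
      rw [← Equiv.Perm.mul_apply, ← Equiv.Perm.mul_apply, ← _root_.zpow_add, ← hcomm m,
        show -m + (m + m) = m by omega, Equiv.Perm.mul_apply] at h
      exact h₁' ((σ ^ m) x) h.symm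
    · subst hm
      have h := congrArg (σ ^ (-m) : Equiv.Perm α) hx
      rw [← Equiv.Perm.mul_apply, ← Equiv.Perm.mul_apply, ← _root_.zpow_add, ← hcomm m,
        show -m + (2 * m + 1) = 1 + m by omega, _root_.zpow_one_add, Equiv.Perm.mul_apply,
        Equiv.Perm.mul_apply] at h
      rw [Equiv.Perm.mul_apply] at h
      exact h₂' ((σ ^ m) x) (p₁.injective h)
  have hPresp : ∀ x y : α, sOrb {σ} x y → sOrb {σ} (p₁ x) (p₁ y) := by
    rintro x y ⟨g, hg, rfl⟩
    rw [← Subgroup.zpowers_eq_closure, Subgroup.mem_zpowers_iff] at hg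
    obtain ⟨k, rfl⟩ := hg
    refine ⟨σ ^ (-k), ?_, ?_⟩
    · rw [← Subgroup.zpowers_eq_closure]
      exact Subgroup.mem_zpowers_iff.2 ⟨-k, rfl⟩
    · rw [← Equiv.Perm.mul_apply, ← hcomm k, Equiv.Perm.mul_apply]
  set QS := OQ ({σ} : Set (Equiv.Perm α)) with hQS
  set QG := OQ ({p₁, p₂} : Set (Equiv.Perm α)) with hQG
  set P : QS → QS := Quotient.lift (fun x => (Quotient.mk'' (p₁ x) : QS))
    (fun x y hxy => mk_eq_mk.2 (hPresp _ _ (mk_eq_mk.1 (Quotient.sound hxy)))) with hP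
  have hPmk : ∀ x : α, P (Quotient.mk'' x) = Quotient.mk'' (p₁ x) := fun _ => rfl
  have hle : Subgroup.closure ({σ} : Set (Equiv.Perm α)) ≤
      Subgroup.closure ({p₁, p₂} : Set (Equiv.Perm α)) := by
    rw [Subgroup.closure_le, Set.singleton_subset_iff, hσ]
    exact mul_mem (Subgroup.subset_closure (Set.mem_insert _ _))
      (Subgroup.subset_closure (Set.mem_insert_iff.2 (Or.inr (Set.mem_singleton _))))
  set f : QS → QG := coarsenLe hle with hf
  have hfsurj : Function.Surjective f := coarsenLe_surjective hle
  have hfib : ∀ X Y : QS, f X = f Y → Y = X ∨ Y = P X := by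
    intro X Y
    induction X using Quotient.inductionOn' with
    | h x =>
    induction Y using Quotient.inductionOn' with
    | h y =>
    intro hXY
    rw [hf, coarsenLe_mk, coarsenLe_mk] at hXY
    obtain ⟨g, hg, rfl⟩ := mk_eq_mk.1 hXY
    obtain ⟨k, hk | hk⟩ := struct g hg
    · subst hk
      exact Or.inl (mk_eq_mk.2 (sOrb_symm ⟨σ ^ k, by
        rw [← Subgroup.zpowers_eq_closure]; exact Subgroup.mem_zpowers_iff.2 ⟨k, rfl⟩, rfl⟩))
    · subst hk
      refine Or.inr ?_
      rw [hPmk]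
      refine mk_eq_mk.2 (sOrb_symm ⟨σ ^ k, by
        rw [← Subgroup.zpowers_eq_closure]; exact Subgroup.mem_zpowers_iff.2 ⟨k, rfl⟩, ?_⟩)
      rw [Equiv.Perm.mul_apply]
  have hPne : ∀ X : QS, P X ≠ X := by
    intro X
    induction X using Quotient.inductionOn' with
    | h x =>
    intro hc
    rw [hPmk] at hc
    obtain ⟨g, hg, hgx⟩ := mk_eq_mk.1 hc
    rw [← Subgroup.zpowers_eq_closure, Subgroup.mem_zpowers_iff] at hg
    obtain ⟨k, rfl⟩ := hg
    have h := congrArg (σ ^ (-k) : Equiv.Perm α) hgx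
    rw [← Equiv.Perm.mul_apply, ← _root_.zpow_add, show -k + k = 0 by omega, _root_.zpow_zero,
      Equiv.Perm.one_apply] at h
    exact hfpf (-k) x (h.symm)
  have hfP : ∀ X : QS, f (P X) = f X := by
    intro X
    induction X using Quotient.inductionOn' with
    | h x =>
    rw [hPmk, hf, coarsenLe_mk, coarsenLe_mk]
    exact mk_eq_mk.2 (sOrb_symm (sOrb_gen (Set.mem_insert _ _) x))
  -- build the bijection QG × Bool ≃ QS
  set s : QG → QS := Function.surjInv hfsurj with hs
  have hfs : ∀ b, f (s b) = b := fun b => Function.surjInv_eq hfsurj b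
  set e : QG × Bool → QS := fun z => if z.2 then s z.1 else P (s z.1) with he
  have hfe : ∀ (b : QG) (c : Bool), f (e (b, c)) = b := by
    intro b c
    cases c
    · show f (P (s b)) = b
      rw [hfP, hfs]
    · show f (s b) = b
      exact hfs b
  have hbij : Function.Bijective e := by
    constructor
    · rintro ⟨b, c⟩ ⟨b', c'⟩ hz
      have hb : b = b' := by rw [← hfe b c, ← hfe b' c', hz]
      subst hb
      cases c <;> cases c'
      · rfl
      · exact absurd (show P (s b) = s b from hz) (hPne (s b))
      · exact absurd (show P (s b) = s b from hz.symm) (hPne (s b))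
      · rfl
    · intro X
      rcases hfib (s (f X)) X (by rw [hfs]) with h | h
      · exact ⟨(f X, true), by show s (f X) = X; exact h.symm⟩
      · exact ⟨(f X, false), by show P (s (f X)) = X; exact h.symm⟩
  have := Nat.card_congr (Equiv.ofBijective e hbij)
  rw [Nat.card_prod] at this
  have hbool : Nat.card Bool = 2 := by simp [Nat.card_eq_fintype_card]
  rw [hbool] at this
  omega

end OrbitCounting


section Main


theorem trace_rhoB_mul_rhoB_transpose (d n : ℕ)
    (p₁ p₂ : Equiv.Perm (Fin n ⊕ Fin n))
    (h₁ : p₁ * p₁ = 1) (h₁' : ∀ v, p₁ v ≠ v)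
    (h₂ : p₂ * p₂ = 1) (h₂' : ∀ v, p₂ v ≠ v) :
    (rhoB d n p₁ * (rhoB d n p₂)ᵀ).trace =
      (d : ℂ) ^ (Nat.card (MulAction.orbitRel.Quotient
        (Subgroup.closure {p₁, p₂} : Subgroup (Equiv.Perm (Fin n ⊕ Fin n)))
        (Fin n ⊕ Fin n))) ∧
    (rhoB d n p₁ * (rhoB d n p₂)ᵀ).trace =
      (d : ℂ) ^ (n - permLength (p₁ * p₂) / 2) := by
  classical
  obtain ⟨c, hc⟩ : ∃ c : ℕ, Nat.card (MulAction.orbitRel.Quotient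
      (Subgroup.closure {p₁, p₂} : Subgroup (Equiv.Perm (Fin n ⊕ Fin n)))
      (Fin n ⊕ Fin n)) = c := ⟨_, rfl⟩
  -- invariance under the whole group
  have inv_of_mem : ∀ (f : (Fin n ⊕ Fin n) → Fin d),
      ((∀ v, f (p₁ v) = f v) ∧ (∀ v, f (p₂ v) = f v)) →
      ∀ g ∈ Subgroup.closure ({p₁, p₂} : Set (Equiv.Perm (Fin n ⊕ Fin n))),
        ∀ v, f (g v) = f v := by
    rintro f ⟨hf1, hf2⟩ g hg
    refine Subgroup.closure_induction (p := fun g _ => ∀ v, f (g v) = f v) ?_ ?_ ?_ ?_ hg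
    · rintro τ hτ v
      rcases Set.mem_insert_iff.1 hτ with rfl | hτ
      · exact hf1 v
      · rw [Set.mem_singleton_iff] at hτ; subst hτ; exact hf2 v
    · intro v; rfl
    · intro g h _ _ ihg ihh v
      rw [Equiv.Perm.mul_apply, ihg, ihh]
    · intro g _ ihg v
      have := ihg (g⁻¹ v)
      rw [← Equiv.Perm.mul_apply, mul_inv_cancel, Equiv.Perm.one_apply] at this
      exact this.symm
  -- the subtype of invariant functions is equivalent to functions on the quotient
  have equivQ : {f : (Fin n ⊕ Fin n) → Fin d //
      (∀ v, f (p₁ v) = f v) ∧ (∀ v, f (p₂ v) = f v)} ≃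
      (OQ ({p₁, p₂} : Set (Equiv.Perm (Fin n ⊕ Fin n))) → Fin d) := by
    refine ⟨fun F => Quotient.lift F.1 (fun x y hxy => ?_),
      fun F => ⟨F ∘ Quotient.mk'', ?_, ?_⟩, fun F => Subtype.ext (funext fun x => rfl),
      fun F => funext fun X => ?_⟩
    · obtain ⟨g, hg, rfl⟩ := mk_eq_mk.1 (Quotient.sound hxy)
      exact (inv_of_mem F.1 F.2 g hg x).symm
    · intro v
      exact congrArg F (mk_eq_mk.2 (sOrb_symm (sOrb_gen (Set.mem_insert _ _) v)))
    · intro v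
      exact congrArg F (mk_eq_mk.2 (sOrb_symm
        (sOrb_gen (Set.mem_insert_iff.2 (Or.inr (Set.mem_singleton _))) v)))
    · induction X using Quotient.inductionOn' with
      | h x => rfl
  have cardsub : Fintype.card {f : (Fin n ⊕ Fin n) → Fin d //
      (∀ v, f (p₁ v) = f v) ∧ (∀ v, f (p₂ v) = f v)} = d ^ c := by
    rw [← Nat.card_eq_fintype_card, Nat.card_congr equivQ, Nat.card_fun,
      Nat.card_eq_fintype_card (α := Fin d), Fintype.card_fin, hc]
  -- compute the trace
  have key : (rhoB d n p₁ * (rhoB d n p₂)ᵀ).trace = (d : ℂ) ^ c := by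
    have expand : (rhoB d n p₁ * (rhoB d n p₂)ᵀ).trace =
        ∑ z : (Fin n → Fin d) × (Fin n → Fin d),
          rhoB d n p₁ z.1 z.2 * rhoB d n p₂ z.1 z.2 := by
      rw [Matrix.trace, Fintype.sum_prod_type]
      simp only [Matrix.diag, Matrix.mul_apply, Matrix.transpose_apply]
    rw [expand]
    have := Equiv.sum_comp (Equiv.sumArrowEquivProdArrow (Fin n) (Fin n) (Fin d))
      (fun z : (Fin n → Fin d) × (Fin n → Fin d) =>
        rhoB d n p₁ z.1 z.2 * rhoB d n p₂ z.1 z.2)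
    rw [← this]
    have hvtx : ∀ (f : (Fin n ⊕ Fin n) → Fin d),
        vtxIdx ((Equiv.sumArrowEquivProdArrow (Fin n) (Fin n) (Fin d)) f).1
          ((Equiv.sumArrowEquivProdArrow (Fin n) (Fin n) (Fin d)) f).2 = f := by
      intro f; funext v; cases v <;> rfl
    have hterm : ∀ (f : (Fin n ⊕ Fin n) → Fin d),
        rhoB d n p₁ ((Equiv.sumArrowEquivProdArrow (Fin n) (Fin n) (Fin d)) f).1
            ((Equiv.sumArrowEquivProdArrow (Fin n) (Fin n) (Fin d)) f).2 *
          rhoB d n p₂ ((Equiv.sumArrowEquivProdArrow (Fin n) (Fin n) (Fin d)) f).1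
            ((Equiv.sumArrowEquivProdArrow (Fin n) (Fin n) (Fin d)) f).2 =
          if ((∀ v, f (p₁ v) = f v) ∧ (∀ v, f (p₂ v) = f v)) then (1 : ℂ) else 0 := by
      intro f
      rw [rhoB, rhoB]
      simp only [hvtx]
      by_cases hA : ∀ v, f (p₁ v) = f v <;> by_cases hB : ∀ v, f (p₂ v) = f v
      · rw [if_pos hA, if_pos hB, if_pos ⟨hA, hB⟩, _root_.one_mul]
      · rw [if_pos hA, if_neg hB, if_neg (fun h => hB h.2), one_mul]
      · rw [if_neg hA, if_pos hB, if_neg (fun h => hA h.1), zero_mul]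
      · rw [if_neg hA, if_neg hB, if_neg (fun h => hA h.1), zero_mul]
    rw [Finset.sum_congr rfl (fun f _ => hterm f), Finset.sum_boole,
      ← Fintype.card_subtype, cardsub]
    push_cast
    ring
  have hdb := doubling p₁ p₂ h₁ h₁' h₂ h₂'
  have hpl := permLength_add_nQ (α := Fin n ⊕ Fin n) (p₁ * p₂)
  have hcard : Nat.card (Fin n ⊕ Fin n) = n + n := by
    simp [Nat.card_eq_fintype_card]
  rw [hdb, hcard] at hpl
  have hc' : Nat.card (OQ ({p₁, p₂} : Set (Equiv.Perm (Fin n ⊕ Fin n)))) = c := hc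
  rw [hc'] at hpl
  have hexp : n - permLength (p₁ * p₂) / 2 = c := by clear * - hpl; omega
  constructor
  · rw [hc]; exact key
  · rw [hexp]; exact key

end Main
end
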